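/- For every δ ≥ 0, λ ≥ 1, c ≥ 0, let H = H(δ,λ,c) be a constant such that in any δ-hyperbolic geodesic metric space, any two (λ,c)-quasi-geodesic paths with the same initial point and the same terminal point are contained in the closed H-neighborhoods of each other. Then the following holds: if p and q are k-connected (λ,c)-quasi-geodesic paths in a δ-hyperbolic geodesic metric space M, and u is a point on p with min{dist_M(u,p₋), dist_M(u,p₊)} ≥ H + 2δ + k, then there exists a point v on q such that dist_M(u,v) ≤ 2(H + δ). -/
import Mathlib


open Set

section MetricPreamble

/-- A geodesic path in a metric space `M`: an isometric map of the interval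
`[0, len]` into `M`. -/
structure GeodPath (M : Type*) [MetricSpace M] where
  len : ℝ
  len_nonneg : 0 ≤ len
  toFun : ℝ → M
  isom : ∀ s ∈ Icc (0:ℝ) len, ∀ t ∈ Icc (0:ℝ) len, dist (toFun s) (toFun t) = |s - t|

/-- A geodesic metric space: any two points are joined by a geodesic path. -/
def IsGeodesicSpace (M : Type*) [MetricSpace M] : Prop :=
  ∀ x y : M, ∃ p : GeodPath M, p.toFun 0 = x ∧ p.toFun p.len = y

/-- `M` is `δ`-hyperbolic: for every geodesic triangle (sides `p : x → y`,
`q : y → z`, `r : x → z`), each side (here the side `r`) is contained in the union of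
the closed `δ`-neighborhoods of the other two sides. -/
def IsDeltaHyperbolic (M : Type*) [MetricSpace M] (δ : ℝ) : Prop :=
  ∀ p q r : GeodPath M,
    p.toFun 0 = r.toFun 0 → q.toFun 0 = p.toFun p.len → q.toFun q.len = r.toFun r.len →
    ∀ t ∈ Icc (0:ℝ) r.len, ∃ u : M,
      ((∃ s ∈ Icc (0:ℝ) p.len, u = p.toFun s) ∨ (∃ s ∈ Icc (0:ℝ) q.len, u = q.toFun s)) ∧
      dist (r.toFun t) u ≤ δ

/-- A `(λ,c)`-quasi-geodesic rectifiable path in `M`, parameterized by arc length: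
a `1`-Lipschitz map of `[0, len]` into `M` such that every subpath `q` (of length
`t - s`) satisfies `l(q) ≤ λ·dist(q₋,q₊) + c`. -/
structure QGPath (M : Type*) [MetricSpace M] (lam c : ℝ) where
  len : ℝ
  len_nonneg : 0 ≤ len
  toFun : ℝ → M
  lipschitz : ∀ s ∈ Icc (0:ℝ) len, ∀ t ∈ Icc (0:ℝ) len, dist (toFun s) (toFun t) ≤ |s - t|
  quasigeod : ∀ s ∈ Icc (0:ℝ) len, ∀ t ∈ Icc (0:ℝ) len, s ≤ t →
    t - s ≤ lam * dist (toFun s) (toFun t) + c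

end MetricPreamble

namespace GeodPath

variable {M : Type*} [MetricSpace M]

/-- The reverse of a geodesic path. -/
def rev (p : GeodPath M) : GeodPath M where
  len := p.len
  len_nonneg := p.len_nonneg
  toFun t := p.toFun (p.len - t)
  isom s hs t ht := by
    have h := p.isom (p.len - s) ⟨by linarith [hs.2], by linarith [hs.1]⟩
      (p.len - t) ⟨by linarith [ht.2], by linarith [ht.1]⟩
    rw [h]
    have : p.len - s - (p.len - t) = t - s := by ring
    rw [this, abs_sub_comm]

/-- A geodesic path is a `(λ,c)`-quasi-geodesic for any `λ ≥ 1`, `c ≥ 0`. -/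
def toQG (p : GeodPath M) (lam c : ℝ) (hlam : 1 ≤ lam) (hc : 0 ≤ c) :
    QGPath M lam c where
  len := p.len
  len_nonneg := p.len_nonneg
  toFun := p.toFun
  lipschitz s hs t ht := (p.isom s hs t ht).le
  quasigeod s hs t ht hst := by
    have h := p.isom s hs t ht
    rw [abs_sub_comm, abs_of_nonneg (by linarith)] at h
    nlinarith [dist_nonneg (x := p.toFun s) (y := p.toFun t)]

end GeodPath

private lemma dist_triangle5 {M : Type*} [MetricSpace M] (a b c d e : M) :
    dist a e ≤ dist a b + dist b c + dist c d + dist d e := by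
  linarith [dist_triangle4 a b c d, dist_triangle a d e]

/-- **Corollary.** For `δ ≥ 0`, `λ ≥ 1`, `c ≥ 0`, let `H = H(δ,λ,c)` be a constant such
that in any `δ`-hyperbolic geodesic metric space, any two `(λ,c)`-quasi-geodesic paths
with the same endpoints are contained in the closed `H`-neighborhoods of each other.
Then: if `p`, `q` are `k`-connected `(λ,c)`-quasi-geodesic paths in a `δ`-hyperbolic
geodesic metric space `M` and `u` is a point on `p` with
`min{dist(u,p₋), dist(u,p₊)} ≥ H + 2δ + k`, there is a point `v` on `q` with
`dist(u,v) ≤ 2(H + δ)`. -/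
theorem point_on_connected_quasigeodesic.{u}
    (δ lam c Hc : ℝ) (hδ : 0 ≤ δ) (hlam : 1 ≤ lam) (hc : 0 ≤ c)
    (hH : ∀ (M' : Type u) [MetricSpace M'], IsGeodesicSpace M' → IsDeltaHyperbolic M' δ →
      ∀ p q : QGPath M' lam c, p.toFun 0 = q.toFun 0 → p.toFun p.len = q.toFun q.len →
        (∀ s ∈ Set.Icc (0:ℝ) p.len, ∃ t ∈ Set.Icc (0:ℝ) q.len,
          dist (p.toFun s) (q.toFun t) ≤ Hc) ∧
        (∀ t ∈ Set.Icc (0:ℝ) q.len, ∃ s ∈ Set.Icc (0:ℝ) p.len,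
          dist (q.toFun t) (p.toFun s) ≤ Hc)) :
    ∀ (M : Type u) [MetricSpace M], IsGeodesicSpace M → IsDeltaHyperbolic M δ →
      ∀ k : ℝ, 0 ≤ k → ∀ p q : QGPath M lam c,
        dist (p.toFun 0) (q.toFun 0) ≤ k → dist (p.toFun p.len) (q.toFun q.len) ≤ k →
        ∀ s ∈ Set.Icc (0:ℝ) p.len,
          Hc + 2 * δ + k ≤
            min (dist (p.toFun s) (p.toFun 0)) (dist (p.toFun s) (p.toFun p.len)) →
          ∃ t ∈ Set.Icc (0:ℝ) q.len, dist (p.toFun s) (q.toFun t) ≤ 2 * (Hc + δ) := by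
  intro M _ hG hHyp k hk p q hk0 hk1 s hs hmin
  -- Hc is nonnegative
  have hHc : 0 ≤ Hc := by
    obtain ⟨t, ht, hd⟩ := (hH M hG hHyp p p rfl rfl).1 s hs
    exact dist_nonneg.trans hd
  obtain ⟨e, he0, he1⟩ := hG (p.toFun 0) (p.toFun p.len)
  obtain ⟨f, hf0, hf1⟩ := hG (q.toFun 0) (q.toFun q.len)
  obtain ⟨g1, hg10, hg11⟩ := hG (p.toFun p.len) (q.toFun q.len)
  obtain ⟨g2, hg20, hg21⟩ := hG (p.toFun 0) (q.toFun 0)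
  obtain ⟨d, hd0, hd1⟩ := hG (p.toFun 0) (q.toFun q.len)
  have hg1len : g1.len = dist (p.toFun p.len) (q.toFun q.len) := by
    have h := g1.isom 0 ⟨le_refl _, g1.len_nonneg⟩ g1.len ⟨g1.len_nonneg, le_refl _⟩
    rw [hg10, hg11] at h
    rw [h, zero_sub, abs_neg, abs_of_nonneg g1.len_nonneg]
  have hg2len : g2.len = dist (p.toFun 0) (q.toFun 0) := by
    have h := g2.isom 0 ⟨le_refl _, g2.len_nonneg⟩ g2.len ⟨g2.len_nonneg, le_refl _⟩
    rw [hg20, hg21] at h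
    rw [h, zero_sub, abs_neg, abs_of_nonneg g2.len_nonneg]
  have hmin1 : Hc + 2 * δ + k ≤ dist (p.toFun s) (p.toFun 0) :=
    hmin.trans (min_le_left _ _)
  have hmin2 : Hc + 2 * δ + k ≤ dist (p.toFun s) (p.toFun p.len) :=
    hmin.trans (min_le_right _ _)
  -- p is Hc-close to e
  obtain ⟨t₀, ht₀, hue⟩ :=
    (hH M hG hHyp p (e.toQG lam c hlam hc) he0.symm he1.symm).1 s hs
  have hue' : dist (p.toFun s) (e.toFun t₀) ≤ Hc := hue
  -- first triangle: d, reversed g1, e; point e t₀ is δ-close to d ∪ g1.rev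
  obtain ⟨m, hm, hdm⟩ := hHyp d g1.rev e (hd0.trans he0.symm)
    (by
      show g1.toFun (g1.len - 0) = d.toFun d.len
      rw [sub_zero, hg11, hd1])
    (by
      show g1.toFun (g1.len - g1.len) = e.toFun e.len
      rw [sub_self, hg10, he1]) t₀ ht₀
  rcases hm with ⟨t₁, ht₁, hmeq⟩ | ⟨s₁, hs₁, hmeq⟩
  · -- m is on the diagonal d
    subst hmeq
    -- second triangle: g2, f, d; point d t₁ is δ-close to g2 ∪ f
    obtain ⟨m₂, hm₂, hdm₂⟩ := hHyp g2 f d (hg20.trans hd0.symm)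
      (hf0.trans hg21.symm) (hf1.trans hd1.symm) t₁ ht₁
    rcases hm₂ with ⟨s₂, hs₂, hmeq₂⟩ | ⟨t₂, ht₂, hmeq₂⟩
    · -- m₂ on the short side g2 : impossible unless m₂ essentially at q₋
      subst hmeq₂
      have hA : dist (g2.toFun s₂) (p.toFun 0) = s₂ := by
        have h := g2.isom s₂ hs₂ 0 ⟨le_refl _, g2.len_nonneg⟩
        rw [hg20] at h
        rw [h, sub_zero, abs_of_nonneg hs₂.1]
      have hA' : dist (g2.toFun s₂) (q.toFun 0) = g2.len - s₂ := by
        have h := g2.isom s₂ hs₂ g2.len ⟨g2.len_nonneg, le_refl _⟩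
        rw [hg21] at h
        rw [h, abs_of_nonpos (by linarith [hs₂.2]), neg_sub]
      have h4 : dist (p.toFun s) (p.toFun 0) ≤
          dist (p.toFun s) (e.toFun t₀) + dist (e.toFun t₀) (d.toFun t₁) +
            dist (d.toFun t₁) (g2.toFun s₂) + dist (g2.toFun s₂) (p.toFun 0) :=
        dist_triangle5 _ _ _ _ _
      have h5 : dist (p.toFun s) (q.toFun 0) ≤
          dist (p.toFun s) (e.toFun t₀) + dist (e.toFun t₀) (d.toFun t₁) +
            dist (d.toFun t₁) (g2.toFun s₂) + dist (g2.toFun s₂) (q.toFun 0) :=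
        dist_triangle5 _ _ _ _ _
      refine ⟨0, ⟨le_refl _, q.len_nonneg⟩, ?_⟩
      rw [hA] at h4
      rw [hA'] at h5
      have hg2k : g2.len ≤ k := hg2len.le.trans hk0
      linarith
    · -- m₂ on f : transfer to q via hH
      subst hmeq₂
      obtain ⟨t₃, ht₃, hqv⟩ :=
        (hH M hG hHyp q (f.toQG lam c hlam hc) hf0.symm hf1.symm).2 t₂ ht₂
      have hqv' : dist (f.toFun t₂) (q.toFun t₃) ≤ Hc := hqv
      refine ⟨t₃, ht₃, ?_⟩
      calc dist (p.toFun s) (q.toFun t₃) ≤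
          dist (p.toFun s) (e.toFun t₀) + dist (e.toFun t₀) (d.toFun t₁) +
            dist (d.toFun t₁) (f.toFun t₂) + dist (f.toFun t₂) (q.toFun t₃) :=
            dist_triangle5 _ _ _ _ _
        _ ≤ 2 * (Hc + δ) := by linarith
  · -- m is on the short side g1.rev : impossible unless m essentially at q₊
    subst hmeq
    have hrlen : g1.rev.len = g1.len := rfl
    rw [hrlen] at hs₁
    have hmB : dist (g1.rev.toFun s₁) (p.toFun p.len) = g1.len - s₁ := by
      show dist (g1.toFun (g1.len - s₁)) (p.toFun p.len) = g1.len - s₁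
      have h := g1.isom (g1.len - s₁) ⟨by linarith [hs₁.2], by linarith [hs₁.1]⟩
        0 ⟨le_refl _, g1.len_nonneg⟩
      rw [hg10] at h
      rw [h, sub_zero, abs_of_nonneg (by linarith [hs₁.2])]
    have hmB' : dist (g1.rev.toFun s₁) (q.toFun q.len) = s₁ := by
      show dist (g1.toFun (g1.len - s₁)) (q.toFun q.len) = s₁
      have h := g1.isom (g1.len - s₁) ⟨by linarith [hs₁.2], by linarith [hs₁.1]⟩
        g1.len ⟨g1.len_nonneg, le_refl _⟩
      rw [hg11] at h
      rw [h, sub_sub_cancel_left, abs_neg, abs_of_nonneg hs₁.1]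
    have h4 : dist (p.toFun s) (p.toFun p.len) ≤
        dist (p.toFun s) (e.toFun t₀) + dist (e.toFun t₀) (g1.rev.toFun s₁) +
          dist (g1.rev.toFun s₁) (p.toFun p.len) := dist_triangle _ _ _ |>.trans
            (by gcongr; exact dist_triangle _ _ _)
    have h5 : dist (p.toFun s) (q.toFun q.len) ≤
        dist (p.toFun s) (e.toFun t₀) + dist (e.toFun t₀) (g1.rev.toFun s₁) +
          dist (g1.rev.toFun s₁) (q.toFun q.len) := dist_triangle _ _ _ |>.trans
            (by gcongr; exact dist_triangle _ _ _)
    refine ⟨q.len, ⟨q.len_nonneg, le_refl _⟩, ?_⟩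
    rw [hmB] at h4
    rw [hmB'] at h5
    have hg1k : g1.len ≤ k := hg1len.le.trans hk1
    linarith
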